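/- Let k ≥ 1, λ ≥ 0, and let L : ℝ^{n×m} → ℝ be any function. Then inf over U ∈ ℝ^{n×k} and V ∈ ℝ^{m×k} of (λ/2)(‖U‖_F² + ‖V‖_F²) + L(UVᵀ) equals inf over W ∈ ℝ^{n×m} with rank(W) ≤ k of λ‖W‖_* + L(W). -/

import Mathlib

open Matrix

/-- The trace norm (nuclear norm) of a real matrix: the sum of its singular
values, i.e. the sum of the square roots of the eigenvalues of `Mᵀ * M`. -/
noncomputable def traceNorm {n d : ℕ} (M : Matrix (Fin n) (Fin d) ℝ) : ℝ :=
  ∑ i, Real.sqrt ((show (Mᵀ * M).IsHermitian by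
    rw [← Matrix.conjTranspose_eq_transpose_of_trivial]
    exact Matrix.isHermitian_conjTranspose_mul_self M).eigenvalues i)

/-- The squared Frobenius norm of a real matrix. -/
noncomputable def frobSq {n d : ℕ} (M : Matrix (Fin n) (Fin d) ℝ) : ℝ :=
  ∑ i, ∑ j, (M i j)^2

/-!
Let `Q` be an orthogonal matrix of eigenvectors of `Wᵀ W`, so that the columns of `W Q` are
orthogonal with lengths the singular values `σₗ` of `W`, and `W = (W Q) Qᵀ`. Moving a factor
`√σₗ` from the `l`-th column of `W Q` to the `l`-th column of `Q` gives `W = U Vᵀ` with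
`‖U‖_F² = ‖V‖_F² = ‖W‖_*`, and only the `rank W ≤ k` columns with `σₗ ≠ 0` are nonzero.
Conversely, if `W = U Vᵀ`, then with the partial isometry `P = W Q Σ⁻¹` we have
`‖W‖_* = tr (Pᵀ U Vᵀ Q) ≤ (‖Pᵀ U‖_F² + ‖Qᵀ V‖_F²) / 2 ≤ (‖U‖_F² + ‖V‖_F²) / 2`.
So every value of either problem is attained or beaten by a value of the other one.
-/

namespace Matrix

section Trace

variable {ι ι' κ : Type*} [Fintype ι] [Fintype ι'] [Fintype κ]

lemma trace_transpose_mul_self_nonneg (A : Matrix ι κ ℝ) : 0 ≤ (Aᵀ * A).trace := by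
  simpa using (posSemidef_conjTranspose_mul_self A).trace_nonneg

lemma two_mul_trace_transpose_mul_le (A B : Matrix ι κ ℝ) :
    2 * (Aᵀ * B).trace ≤ (Aᵀ * A).trace + (Bᵀ * B).trace := by
  have h := trace_transpose_mul_self_nonneg (A - B)
  have hBA : (Bᵀ * A).trace = (Aᵀ * B).trace := by
    rw [← trace_transpose, transpose_mul, transpose_transpose]
  simp only [transpose_sub, Matrix.sub_mul, Matrix.mul_sub, trace_sub] at h
  linarith

lemma trace_transpose_mul_self_le_of_isIdempotentElem [DecidableEq ι] {P : Matrix ι κ ℝ}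
    (hP : IsIdempotentElem (P * Pᵀ)) (A : Matrix ι ι' ℝ) :
    ((Pᵀ * A)ᵀ * (Pᵀ * A)).trace ≤ (Aᵀ * A).trace := by
  set R := P * Pᵀ
  have hR : Rᵀ = R := by simp [R]
  have hcompl : ((1 - R) * A)ᵀ * ((1 - R) * A) = Aᵀ * (1 - R) * A := by
    rw [transpose_mul, transpose_sub, transpose_one, hR, Matrix.mul_assoc,
      ← Matrix.mul_assoc (1 - R), hP.one_sub.eq, Matrix.mul_assoc]
  have hsplit : Aᵀ * A = (Pᵀ * A)ᵀ * (Pᵀ * A) + ((1 - R) * A)ᵀ * ((1 - R) * A) := by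
    rw [hcompl, transpose_mul, transpose_transpose, Matrix.mul_sub, Matrix.sub_mul]
    simp only [R, Matrix.mul_assoc, Matrix.mul_one]
    abel
  rw [hsplit, trace_add]
  linarith [trace_transpose_mul_self_nonneg ((1 - R) * A)]

lemma mul_diagonal_eq_self_of_transpose_mul_self_eq_diagonal [DecidableEq κ]
    {A : Matrix ι κ ℝ} {d w : κ → ℝ} (hA : Aᵀ * A = diagonal d)
    (hw : ∀ l, d l ≠ 0 → w l = 1) : A * diagonal w = A := by
  set B := A * diagonal (w - 1)
  have hB : Bᵀ * B = 0 := by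
    rw [transpose_mul, diagonal_transpose, Matrix.mul_assoc, ← Matrix.mul_assoc Aᵀ, hA,
      diagonal_mul_diagonal, diagonal_mul_diagonal, ← diagonal_zero]
    congr 1
    funext l
    by_cases hl : d l = 0
    · simp [hl]
    · simp [hw l hl]
  have hB0 : B = 0 := by
    simpa using conjTranspose_mul_self_eq_zero.mp (by simpa using hB)
  have hsub : diagonal (w - 1) = diagonal w - 1 := by ext i j; by_cases h : i = j <;> simp [h]
  rw [← sub_eq_zero, ← hB0]
  simp only [B, hsub, Matrix.mul_sub, Matrix.mul_one]

lemma trace_transpose_mul_self_mul_of_mul_mul_transpose {κ' : Type*} [Fintype κ']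
    {C : Matrix ι κ ℝ} {E : Matrix κ κ' ℝ} (hC : C * (E * Eᵀ) = C) :
    ((C * E)ᵀ * (C * E)).trace = (Cᵀ * C).trace := by
  rw [trace_mul_comm, transpose_mul, Matrix.mul_assoc, ← Matrix.mul_assoc E, ← Matrix.mul_assoc,
    hC, trace_mul_comm]

lemma exists_mul_transpose_eq_of_card_le [DecidableEq κ] {k : ℕ} (A : Matrix ι κ ℝ)
    (B : Matrix ι' κ ℝ) (s : Finset κ) (hs : s.card ≤ k)
    (hA : ∀ i, ∀ l ∉ s, A i l = 0) (hB : ∀ i, ∀ l ∉ s, B i l = 0) :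
    ∃ (A' : Matrix ι (Fin k) ℝ) (B' : Matrix ι' (Fin k) ℝ), A' * B'ᵀ = A * Bᵀ ∧
      (A'ᵀ * A').trace = (Aᵀ * A).trace ∧ (B'ᵀ * B').trace = (Bᵀ * B).trace := by
  obtain ⟨g⟩ : Nonempty (s ↪ Fin k) := Function.Embedding.nonempty_of_card_le (by simpa using hs)
  let E : Matrix κ (Fin k) ℝ :=
    of fun l c => if h : l ∈ s then if g ⟨l, h⟩ = c then 1 else 0 else 0
  have hE : E * Eᵀ = diagonal (fun l => if l ∈ s then 1 else 0) := by
    ext l l'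
    by_cases hl : l ∈ s <;> by_cases hl' : l' ∈ s <;>
      simp [E, mul_apply, diagonal_apply, hl, hl', Finset.sum_ite_eq, g.injective.eq_iff]
    exact ne_of_mem_of_not_mem hl hl'
  have hEA : A * (E * Eᵀ) = A := by
    ext i l; by_cases hl : l ∈ s <;> simp [hE, hl, hA]
  have hEB : B * (E * Eᵀ) = B := by
    ext i l; by_cases hl : l ∈ s <;> simp [hE, hl, hB]
  refine ⟨A * E, B * E, ?_, trace_transpose_mul_self_mul_of_mul_mul_transpose hEA,
    trace_transpose_mul_self_mul_of_mul_mul_transpose hEB⟩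
  rw [transpose_mul, Matrix.mul_assoc, ← Matrix.mul_assoc E, ← Matrix.mul_assoc, hEA]

end Trace

lemma isHermitian_transpose_mul_self {ι κ : Type*} [Fintype ι] (M : Matrix ι κ ℝ) :
    (Mᵀ * M).IsHermitian := by
  simpa using isHermitian_conjTranspose_mul_self M

section SingularValues

variable {ι κ : Type*} [Fintype ι] [Fintype κ] [DecidableEq κ]

noncomputable def rightSingularVectors (M : Matrix ι κ ℝ) : Matrix κ κ ℝ :=
  (isHermitian_transpose_mul_self M).eigenvectorUnitary

noncomputable def singularValues (M : Matrix ι κ ℝ) (l : κ) : ℝ :=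
  √((isHermitian_transpose_mul_self M).eigenvalues l)

lemma singularValues_nonneg (M : Matrix ι κ ℝ) (l : κ) : 0 ≤ singularValues M l :=
  Real.sqrt_nonneg _

lemma transpose_rightSingularVectors_mul_self (M : Matrix ι κ ℝ) :
    (rightSingularVectors M)ᵀ * rightSingularVectors M = 1 := by
  have h := Unitary.coe_star_mul_self (isHermitian_transpose_mul_self M).eigenvectorUnitary
  rwa [star_eq_conjTranspose, conjTranspose_eq_transpose_of_trivial] at h

lemma rightSingularVectors_mul_transpose_self (M : Matrix ι κ ℝ) :
    rightSingularVectors M * (rightSingularVectors M)ᵀ = 1 :=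
  mul_eq_one_comm.mp (transpose_rightSingularVectors_mul_self M)

lemma eigenvalues_transpose_mul_self_nonneg (M : Matrix ι κ ℝ) (l : κ) :
    0 ≤ (isHermitian_transpose_mul_self M).eigenvalues l :=
  (posSemidef_conjTranspose_mul_self M).eigenvalues_nonneg l

lemma gram_mul_rightSingularVectors (M : Matrix ι κ ℝ) :
    (M * rightSingularVectors M)ᵀ * (M * rightSingularVectors M) =
      diagonal (fun l => singularValues M l ^ 2) := by
  have h := (isHermitian_transpose_mul_self M).conjStarAlgAut_star_eigenvectorUnitary
  rw [Unitary.conjStarAlgAut_star_apply, star_eq_conjTranspose,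
    conjTranspose_eq_transpose_of_trivial] at h
  have hdiag : diagonal (fun l => singularValues M l ^ 2) =
      diagonal (RCLike.ofReal ∘ (isHermitian_transpose_mul_self M).eigenvalues) := by
    congr 1
    funext l
    simp [singularValues, Real.sq_sqrt (eigenvalues_transpose_mul_self_nonneg M l)]
  rw [hdiag, ← h, transpose_mul, Matrix.mul_assoc, ← Matrix.mul_assoc Mᵀ, ← Matrix.mul_assoc]
  rfl

lemma card_singularValues_ne_zero (M : Matrix ι κ ℝ) :
    (Finset.univ.filter fun l => singularValues M l ≠ 0).card = M.rank := by
  rw [← rank_transpose_mul_self, (isHermitian_transpose_mul_self M).rank_eq_card_non_zero_eigs,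
    Fintype.card_subtype]
  refine congrArg Finset.card (Finset.filter_congr fun l _ => ?_)
  rw [singularValues, Real.sqrt_ne_zero (eigenvalues_transpose_mul_self_nonneg M l)]

lemma exists_mul_transpose_eq_of_rank_le {k : ℕ} (M : Matrix ι κ ℝ) (hM : M.rank ≤ k) :
    ∃ (U : Matrix ι (Fin k) ℝ) (V : Matrix κ (Fin k) ℝ), U * Vᵀ = M ∧
      (Uᵀ * U).trace = ∑ l, singularValues M l ∧ (Vᵀ * V).trace = ∑ l, singularValues M l := by
  have hG := gram_mul_rightSingularVectors M
  set Q := rightSingularVectors M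
  set σ := singularValues M
  let τ : κ → ℝ := fun l => √(σ l)
  have hτ (l : κ) : τ l ^ 2 = σ l := Real.sq_sqrt (singularValues_nonneg M l)
  -- `0⁻¹ = 0`, so both factors vanish in the columns where `σ = 0`.
  let U₀ := M * Q * diagonal (fun l => (τ l)⁻¹)
  let V₀ := Q * diagonal τ
  have hMQ : M * Q * diagonal (fun l => (τ l)⁻¹ * τ l) = M * Q := by
    refine mul_diagonal_eq_self_of_transpose_mul_self_eq_diagonal hG fun l hl => inv_mul_cancel₀ ?_
    exact Real.sqrt_ne_zero'.mpr ((singularValues_nonneg M l).lt_of_ne' (by simpa using hl))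
  have hUV : U₀ * V₀ᵀ = M := by
    rw [transpose_mul, diagonal_transpose, Matrix.mul_assoc, ← Matrix.mul_assoc (diagonal _),
      diagonal_mul_diagonal, ← Matrix.mul_assoc, hMQ, Matrix.mul_assoc,
      rightSingularVectors_mul_transpose_self, Matrix.mul_one]
  have hU : (U₀ᵀ * U₀).trace = ∑ l, σ l := by
    rw [transpose_mul, diagonal_transpose, Matrix.mul_assoc, ← Matrix.mul_assoc (M * Q)ᵀ,
      hG, diagonal_mul_diagonal, diagonal_mul_diagonal, trace_diagonal]
    refine Finset.sum_congr rfl fun l _ => ?_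
    rw [← hτ l]
    grind
  have hV : (V₀ᵀ * V₀).trace = ∑ l, σ l := by
    rw [transpose_mul, diagonal_transpose, Matrix.mul_assoc, ← Matrix.mul_assoc Qᵀ,
      transpose_rightSingularVectors_mul_self, Matrix.one_mul, diagonal_mul_diagonal,
      trace_diagonal]
    exact Finset.sum_congr rfl fun l _ => Real.mul_self_sqrt (singularValues_nonneg M l)
  obtain ⟨U, V, hUV', hU', hV'⟩ := exists_mul_transpose_eq_of_card_le (k := k) U₀ V₀
    (Finset.univ.filter (σ · ≠ 0)) (by rwa [card_singularValues_ne_zero])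
    (fun i l hl => by simp_all [U₀, τ]) (fun i l hl => by simp_all [V₀, τ])
  exact ⟨U, V, hUV'.trans hUV, hU'.trans hU, hV'.trans hV⟩

lemma two_mul_sum_singularValues_mul_transpose_le {ρ : Type*} [Fintype ρ] [DecidableEq ι]
    (U : Matrix ι ρ ℝ) (V : Matrix κ ρ ℝ) :
    2 * ∑ l, singularValues (U * Vᵀ) l ≤ (Uᵀ * U).trace + (Vᵀ * V).trace := by
  set M := U * Vᵀ
  have hG := gram_mul_rightSingularVectors M
  set Q := rightSingularVectors M
  set σ := singularValues M
  -- `0⁻¹ = 0`, so `Pᵀ P` is the orthogonal projection onto the coordinates where `σ ≠ 0`.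
  set P := M * Q * diagonal (fun l => (σ l)⁻¹)
  have hPP : Pᵀ * P = diagonal (fun l => σ l * (σ l)⁻¹) := by
    rw [transpose_mul, diagonal_transpose, Matrix.mul_assoc, ← Matrix.mul_assoc (M * Q)ᵀ,
      hG, diagonal_mul_diagonal, diagonal_mul_diagonal]
    congr 1
    funext l
    grind
  have hP : IsIdempotentElem (P * Pᵀ) := by
    rw [IsIdempotentElem, Matrix.mul_assoc, ← Matrix.mul_assoc Pᵀ, hPP, ← Matrix.mul_assoc P]
    congr 1
    rw [Matrix.mul_assoc, diagonal_mul_diagonal]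
    congr 2
    funext l
    grind
  have hQ : IsIdempotentElem (Q * Qᵀ) := by
    rw [rightSingularVectors_mul_transpose_self]
    exact IsIdempotentElem.one
  have hPM : Pᵀ * (M * Q) = diagonal (fun l => (σ l)⁻¹ * σ l ^ 2) := by
    rw [transpose_mul, diagonal_transpose, Matrix.mul_assoc, hG, diagonal_mul_diagonal]
  have hsum : ((Qᵀ * V)ᵀ * (Pᵀ * U)).trace = ∑ l, σ l := by
    rw [transpose_mul, transpose_transpose, trace_mul_comm, Matrix.mul_assoc,
      ← Matrix.mul_assoc U, hPM, trace_diagonal]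
    refine Finset.sum_congr rfl fun l _ => ?_
    grind
  calc 2 * ∑ l, σ l = 2 * ((Qᵀ * V)ᵀ * (Pᵀ * U)).trace := by rw [hsum]
    _ ≤ ((Qᵀ * V)ᵀ * (Qᵀ * V)).trace + ((Pᵀ * U)ᵀ * (Pᵀ * U)).trace :=
      two_mul_trace_transpose_mul_le _ _
    _ ≤ (Vᵀ * V).trace + (Uᵀ * U).trace :=
      add_le_add (trace_transpose_mul_self_le_of_isIdempotentElem hQ V)
        (trace_transpose_mul_self_le_of_isIdempotentElem hP U)
    _ = (Uᵀ * U).trace + (Vᵀ * V).trace := add_comm _ _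

end SingularValues

end Matrix

lemma frobSq_eq_trace {n d : ℕ} (M : Matrix (Fin n) (Fin d) ℝ) : frobSq M = (Mᵀ * M).trace := by
  rw [frobSq, Finset.sum_comm]
  simp [trace, mul_apply, sq]

lemma traceNorm_eq_sum_singularValues {n d : ℕ} (M : Matrix (Fin n) (Fin d) ℝ) :
    traceNorm M = ∑ l, singularValues M l :=
  rfl

theorem factored_eq_rank_constrained_inf_general {n m k : ℕ}
    (lam : ℝ) (hlam : 0 ≤ lam) (L : Matrix (Fin n) (Fin m) ℝ → ℝ) :
    sInf {c : ℝ | ∃ (U : Matrix (Fin n) (Fin k) ℝ) (V : Matrix (Fin m) (Fin k) ℝ),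
        c = (lam/2) * (frobSq U + frobSq V) + L (U * Vᵀ)}
      = sInf {c : ℝ | ∃ W : Matrix (Fin n) (Fin m) ℝ,
          W.rank ≤ k ∧ c = lam * traceNorm W + L W} := by
  apply csInf_eq_csInf_of_forall_exists_le
  · rintro _ ⟨U, V, rfl⟩
    refine ⟨_, ⟨U * Vᵀ, (rank_mul_le_left U Vᵀ).trans U.rank_le_width, rfl⟩, ?_⟩
    have h := two_mul_sum_singularValues_mul_transpose_le U V
    rw [← traceNorm_eq_sum_singularValues, ← frobSq_eq_trace, ← frobSq_eq_trace] at h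
    nlinarith
  · rintro _ ⟨W, hW, rfl⟩
    obtain ⟨U, V, rfl, hU, hV⟩ := exists_mul_transpose_eq_of_rank_le W hW
    refine ⟨_, ⟨U, V, rfl⟩, le_of_eq ?_⟩
    rw [frobSq_eq_trace, frobSq_eq_trace, hU, hV, traceNorm_eq_sum_singularValues]
    ring

/-- Equivalence of the factored problem Eq. (12) and the rank-constrained
trace-norm-regularized problem Eq. (6):
inf_{U,V} (λ/2)(‖U‖_F² + ‖V‖_F²) + L(UVᵀ) = inf_{rank W ≤ k} λ‖W‖_* + L(W). -/
theorem factored_eq_rank_constrained_inf {n m k : ℕ} (hk : 1 ≤ k)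
    (lam : ℝ) (hlam : 0 ≤ lam) (L : Matrix (Fin n) (Fin m) ℝ → ℝ) :
    sInf {c : ℝ | ∃ (U : Matrix (Fin n) (Fin k) ℝ) (V : Matrix (Fin m) (Fin k) ℝ),
        c = (lam/2) * (frobSq U + frobSq V) + L (U * Vᵀ)}
      = sInf {c : ℝ | ∃ W : Matrix (Fin n) (Fin m) ℝ,
          W.rank ≤ k ∧ c = lam * traceNorm W + L W} :=
  factored_eq_rank_constrained_inf_general lam hlam L
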